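/- Let p ∈ ℕ, p ≥ 1, and let f ∈ C^∞(ℝ,ℝ) be convex (f'' ≥ 0) on a compact interval [a,b], and suppose that for every w ∈ [a,b] there exists 2 ≤ j ≤ p+1 with f^{(j)}(w) ≠ 0. Then f' is strictly increasing on [a,b] and its inverse function (f')^{-1} : f'([a,b]) → [a,b] is (1/p)-Hölder continuous, i.e. there exists H > 0 such that |(f')^{-1}(s) − (f')^{-1}(s')| ≤ H |s − s'|^{1/p} for all s, s' ∈ f'([a,b]). -/

import Mathlib

open MeasureTheory Set Filter Topology
open scoped ENNReal NNReal

/-- The `Φ`-variation of `v : ℝ → ℝ` on a set `I ⊆ ℝ`: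
`TV^Φ v(I) = sup { Σ Φ(|v(x_{i+1}) - v(x_i)|) : x_1 < … < x_n, x_i ∈ I }`. -/
noncomputable def phiVar (Φ : ℝ → ℝ) (v : ℝ → ℝ) (I : Set ℝ) : ℝ≥0∞ :=
  ⨆ (n : ℕ) (x : ℕ → ℝ) (_ : StrictMonoOn x (Set.Iic n)) (_ : ∀ i ≤ n, x i ∈ I),
    ∑ i ∈ Finset.range n, ENNReal.ofReal (Φ |v (x (i + 1)) - v (x i)|)

/-- The (pointwise) total variation of `v` on `I`. -/
noncomputable def tv (v : ℝ → ℝ) (I : Set ℝ) : ℝ≥0∞ := phiVar id v I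

/-- `u : ℝ → ℝ → ℝ` (time, space) is a bounded entropy solution of
`u_t + f(u)_x = 0` with initial datum `u₀`. -/
structure IsEntropySolution (f u₀ : ℝ → ℝ) (u : ℝ → ℝ → ℝ) : Prop where
  meas : Measurable (Function.uncurry u)
  bdd : ∃ M : ℝ, ∀ t x, |u t x| ≤ M
  init : ∀ᵐ x : ℝ ∂volume, u 0 x = u₀ x
  timeCont : ∀ t₀ ≥ (0:ℝ), ∀ R > (0:ℝ),
    Tendsto (fun t => ∫ x in Set.Ioo (-R) R, |u t x - u t₀ x|) (𝓝[≥] t₀) (𝓝 0)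
  weak : ∀ φ : ℝ × ℝ → ℝ, ContDiff ℝ (⊤ : ℕ∞) φ → HasCompactSupport φ →
    (∀ p : ℝ × ℝ, p.1 ≤ 0 → φ p = 0) →
    (∫ t in Set.Ioi (0:ℝ), ∫ x : ℝ,
      (u t x * fderiv ℝ φ (t, x) (1, 0) + f (u t x) * fderiv ℝ φ (t, x) (0, 1))) = 0
  entropy : ∀ φ : ℝ × ℝ → ℝ, ContDiff ℝ (⊤ : ℕ∞) φ → HasCompactSupport φ →
    (∀ p : ℝ × ℝ, p.1 ≤ 0 → φ p = 0) → (∀ p, 0 ≤ φ p) →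
    ∀ η q : ℝ → ℝ, ContDiff ℝ (⊤ : ℕ∞) η → ConvexOn ℝ Set.univ η →
    (∀ w, HasDerivAt q (deriv f w * deriv η w) w) →
    0 ≤ ∫ t in Set.Ioi (0:ℝ), ∫ x : ℝ,
      (η (u t x) * fderiv ℝ φ (t, x) (1, 0) + q (u t x) * fderiv ℝ φ (t, x) (0, 1))

/-- `v` is monotone (nondecreasing or nonincreasing) on `I`. -/
def MonotoneOrAntitoneOn (v : ℝ → ℝ) (I : Set ℝ) : Prop := MonotoneOn v I ∨ AntitoneOn v I

/-- `v : ℝ → ℝ` is piecewise monotone: `ℝ` splits into finitely many intervals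
on each of which `v` is monotone. -/
def PiecewiseMonotone (v : ℝ → ℝ) : Prop :=
  ∃ (n : ℕ) (a : ℕ → ℝ), Monotone a ∧
    MonotoneOrAntitoneOn v (Set.Iic (a 0)) ∧
    (∀ i < n, MonotoneOrAntitoneOn v (Set.Icc (a i) (a (i + 1)))) ∧
    MonotoneOrAntitoneOn v (Set.Ici (a n))

/-- `𝔇(w₁,w₂)`: twice the `C⁰` distance of `f` restricted to `[w₁,w₂]` from the
affine functions, i.e. `min_λ max_{w,w' ∈ [w₁,w₂]} (f w - f w' - λ (w - w'))`. -/
noncomputable def dNL (f : ℝ → ℝ) (w₁ w₂ : ℝ) : ℝ :=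
  ⨅ lam : ℝ, ⨆ w : Set.Icc w₁ w₂, ⨆ w' : Set.Icc w₁ w₂,
    (f w - f w' - lam * ((w : ℝ) - (w' : ℝ)))

/-- `X` is a Lagrangian representation of the entropy solution `u`
(with pointwise defined `u`) with initial datum `u₀`. -/
structure IsLagrangianRep (u₀ : ℝ → ℝ) (u : ℝ → ℝ → ℝ) (X : ℝ → ℝ → ℝ) : Prop where
  lip : ∃ L : NNReal, ∀ y, LipschitzOnWith L (fun t => X t y) (Set.Ici 0)
  mono : ∀ t ≥ (0:ℝ), Monotone (fun y => X t y)
  cont : ∀ t ≥ (0:ℝ), Continuous (fun y => X t y)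
  init : ∀ y, X 0 y = y
  repr : ∀ t ≥ (0:ℝ), ∃ N : Set ℝ, N.Countable ∧
    ∀ x, x ∉ N → ∀ y, X t y = x → u t x = u₀ y

/-- `f` has degeneracy `p` on `[-M, M]`: the set of zeros of `f''` in `[-M,M]` is
finite and at each such zero some derivative `f^(q+1)`, `2 ≤ q ≤ p`, is nonzero. -/
def HasDegeneracy (f : ℝ → ℝ) (p : ℕ) (M : ℝ) : Prop :=
  {w ∈ Set.Icc (-M) M | iteratedDeriv 2 f w = 0}.Finite ∧
  ∀ w ∈ Set.Icc (-M) M, iteratedDeriv 2 f w = 0 →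
    ∃ q : ℕ, 2 ≤ q ∧ q ≤ p ∧ iteratedDeriv (q + 1) f w ≠ 0

namespace Stmt8Aux


lemma lemA (w b' : ℝ) : ∀ (r : ℕ) (h : ℝ → ℝ), ContDiff ℝ (⊤:ℕ∞) h → ∀ c : ℝ, 0 ≤ c →
    (∀ k < r, iteratedDeriv k h w = 0) →
    (∀ s ∈ Icc w b', c ≤ iteratedDeriv r h s) →
    ∀ s ∈ Icc w b', c * (s - w)^r / (r.factorial : ℝ) ≤ h s := by
  intro r
  induction r with
  | zero =>
    intro h hh c hc hd hb s hs
    simpa using hb s hs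
  | succ r IH =>
    intro h hh c hc hd hb s hs
    have hh' : ContDiff ℝ (⊤:ℕ∞) (deriv h) := (contDiff_infty_iff_deriv.mp hh).2
    have IH' := IH (deriv h) hh' c hc
      (fun k hk => by rw [← iteratedDeriv_succ']; exact hd (k+1) (by omega))
      (fun s hs => by rw [← iteratedDeriv_succ']; exact hb s hs)
    set φ : ℝ → ℝ := fun s => h s - c * (s - w)^(r+1) / ((r+1).factorial : ℝ) with hφ
    have hder : ∀ x : ℝ, HasDerivAt φ (deriv h x - c * (x - w)^r / (r.factorial : ℝ)) x := by
      intro x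
      have h1 : HasDerivAt h (deriv h x) x := (hh.differentiable (by simp) x).hasDerivAt
      have h2 : HasDerivAt (fun s : ℝ => (s - w)^(r+1)) ((r+1 : ℕ) * (x - w)^r * 1) x := by
        simpa using ((hasDerivAt_id x).sub_const w).fun_pow (r+1)
      have h3 := (h1.sub (((h2.const_mul c)).div_const ((r+1).factorial : ℝ)))
      convert h3 using 1
      · rfl
      · rfl
      · rfl
      have : ((r+1).factorial : ℝ) = (r+1 : ℕ) * (r.factorial : ℝ) := by
        rw [Nat.factorial_succ]; push_cast; ring
      rw [this]
      have hr : (r.factorial : ℝ) ≠ 0 := by positivity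
      field_simp
    have hmono : MonotoneOn φ (Icc w b') := by
      apply monotoneOn_of_deriv_nonneg (convex_Icc w b')
      · exact (hh.continuous.sub ((continuous_const.mul ((continuous_id.sub continuous_const).pow (r+1))).div_const _)).continuousOn
      · intro x hx
        exact ((hder x).differentiableAt).differentiableWithinAt
      · intro x hx
        rw [(hder x).deriv]
        have hx' : x ∈ Icc w b' := interior_subset hx
        have := IH' x hx'
        linarith
    have hw : w ∈ Icc w b' := ⟨le_refl _, hs.1.trans hs.2⟩
    have hw0 : h w = 0 := by simpa using hd 0 (Nat.succ_pos r)
    have h0 : φ w = 0 := by simp [hφ, hw0]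
    have := hmono hw hs hs.1
    rw [h0] at this
    simp only [hφ] at this
    linarith


lemma lemB (w a' : ℝ) : ∀ (r : ℕ) (h : ℝ → ℝ), ContDiff ℝ (⊤:ℕ∞) h → ∀ c : ℝ, 0 ≤ c →
    (∀ k < r, iteratedDeriv k h w = 0) →
    (∀ s ∈ Icc a' w, c ≤ iteratedDeriv r h s) →
    ∀ s ∈ Icc a' w, c * (w - s)^r / (r.factorial : ℝ) ≤ (-1)^r * h s := by
  intro r
  induction r with
  | zero =>
    intro h hh c hc hd hb s hs
    simpa using hb s hs
  | succ r IH =>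
    intro h hh c hc hd hb s hs
    have hh' : ContDiff ℝ (⊤:ℕ∞) (deriv h) := (contDiff_infty_iff_deriv.mp hh).2
    have IH' := IH (deriv h) hh' c hc
      (fun k hk => by rw [← iteratedDeriv_succ']; exact hd (k+1) (by omega))
      (fun s hs => by rw [← iteratedDeriv_succ']; exact hb s hs)
    set ψ : ℝ → ℝ := fun s => (-1)^(r+1) * h s - c * (w - s)^(r+1) / ((r+1).factorial : ℝ) with hψ
    have hder : ∀ x : ℝ, HasDerivAt ψ
        ((-1)^(r+1) * deriv h x + c * (w - x)^r / (r.factorial : ℝ)) x := by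
      intro x
      have h1 : HasDerivAt h (deriv h x) x := (hh.differentiable (by simp) x).hasDerivAt
      have h2 : HasDerivAt (fun s : ℝ => (w - s)^(r+1)) ((r+1 : ℕ) * (w - x)^r * (-1)) x := by
        simpa using ((hasDerivAt_id x).const_sub w).fun_pow (r+1)
      have h3 := ((h1.const_mul ((-1:ℝ)^(r+1))).sub ((h2.const_mul c).div_const ((r+1).factorial : ℝ)))
      convert h3 using 1
      · rfl
      · rfl
      · rfl
      have : ((r+1).factorial : ℝ) = (r+1 : ℕ) * (r.factorial : ℝ) := by
        rw [Nat.factorial_succ]; push_cast; ring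
      rw [this]
      have hr : (r.factorial : ℝ) ≠ 0 := by positivity
      field_simp
      ring
    have hanti : AntitoneOn ψ (Icc a' w) := by
      apply antitoneOn_of_deriv_nonpos (convex_Icc a' w)
      · exact ((continuous_const.mul hh.continuous).sub
          ((continuous_const.mul ((continuous_const.sub continuous_id).pow (r+1))).div_const _)).continuousOn
      · intro x hx
        exact ((hder x).differentiableAt).differentiableWithinAt
      · intro x hx
        rw [(hder x).deriv]
        have hx' : x ∈ Icc a' w := interior_subset hx
        have := IH' x hx'
        have : (-1)^(r+1) * deriv h x ≤ -(c * (w - x)^r / (r.factorial : ℝ)) := by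
          have h4 := IH' x hx'
          have : (-1:ℝ)^(r+1) = -(-1)^r := by ring
          rw [this]
          nlinarith [h4]
        linarith
    have hw : w ∈ Icc a' w := ⟨hs.1.trans hs.2, le_refl _⟩
    have hw0 : h w = 0 := by simpa using hd 0 (Nat.succ_pos r)
    have h0 : ψ w = 0 := by simp [hψ, hw0]
    have := hanti hs hw hs.2
    rw [h0] at this
    simp only [hψ] at this
    linarith

lemma lemKpos (h : ℝ → ℝ) (hh : ContDiff ℝ (⊤:ℕ∞) h) (w δ c : ℝ) (hδ : 0 < δ) (hc : 0 < c)
    (r : ℕ) (hd : ∀ k < r, iteratedDeriv k h w = 0)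
    (hbnd : ∀ s ∈ Icc (w-δ) (w+δ), c ≤ |iteratedDeriv r h s|)
    (hpos : 0 < iteratedDeriv r h w) :
    ∀ s ∈ Icc (w-δ) (w+δ), c * |s - w|^r / (r.factorial:ℝ) ≤ |h s| := by
  have hXc : Continuous (iteratedDeriv r h) :=
    hh.continuous_iteratedDeriv r (by exact_mod_cast le_top)
  have hwmem : w ∈ Icc (w-δ) (w+δ) := by constructor <;> linarith
  have hsgn : ∀ s ∈ Icc (w-δ) (w+δ), c ≤ iteratedDeriv r h s := by
    intro s hs
    by_contra hlt
    push_neg at hlt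
    have h1 : iteratedDeriv r h s ≤ -c := by
      have := hbnd s hs
      rcases abs_cases (iteratedDeriv r h s) with ⟨he, _⟩ | ⟨he, _⟩ <;> linarith
    have h2 : c ≤ iteratedDeriv r h w := by
      have := hbnd w hwmem
      rcases abs_cases (iteratedDeriv r h w) with ⟨he, _⟩ | ⟨he, _⟩ <;> linarith
    rcases le_total s w with hsw | hws
    · obtain ⟨z, hz, hz0⟩ := intermediate_value_Icc hsw hXc.continuousOn
        (show (0:ℝ) ∈ Icc (iteratedDeriv r h s) (iteratedDeriv r h w) from ⟨by linarith, by linarith⟩)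
      have hzmem : z ∈ Icc (w-δ) (w+δ) := ⟨le_trans hs.1 hz.1, le_trans hz.2 hwmem.2⟩
      have := hbnd z hzmem
      rw [hz0] at this
      simp at this; linarith
    · obtain ⟨z, hz, hz0⟩ := intermediate_value_Icc' hws hXc.continuousOn
        (show (0:ℝ) ∈ Icc (iteratedDeriv r h s) (iteratedDeriv r h w) from ⟨by linarith, by linarith⟩)
      have hzmem : z ∈ Icc (w-δ) (w+δ) := ⟨le_trans hwmem.1 hz.1, le_trans hz.2 hs.2⟩
      have := hbnd z hzmem
      rw [hz0] at this
      simp at this; linarith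
  intro s hs
  rcases le_total w s with hws | hsw
  · have := lemA w (w+δ) r h hh c hc.le hd
      (fun t ht => hsgn t ⟨by linarith [ht.1], ht.2⟩) s ⟨hws, hs.2⟩
    have habs : |s - w| = s - w := abs_of_nonneg (by linarith)
    rw [habs]
    calc c * (s-w)^r / (r.factorial:ℝ) ≤ h s := this
    _ ≤ |h s| := le_abs_self _
  · have := lemB w (w-δ) r h hh c hc.le hd
      (fun t ht => hsgn t ⟨ht.1, by linarith [ht.2]⟩) s ⟨hs.1, hsw⟩
    have habs : |s - w| = w - s := by rw [abs_sub_comm]; exact abs_of_nonneg (by linarith)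
    rw [habs]
    calc c * (w-s)^r / (r.factorial:ℝ) ≤ (-1)^r * h s := this
    _ ≤ |(-1)^r * h s| := le_abs_self _
    _ = |h s| := by rw [abs_mul, abs_pow, abs_neg, abs_one, one_pow, one_mul]

lemma lemK (h : ℝ → ℝ) (hh : ContDiff ℝ (⊤:ℕ∞) h) (w δ c : ℝ) (hδ : 0 < δ) (hc : 0 < c)
    (r : ℕ) (hd : ∀ k < r, iteratedDeriv k h w = 0)
    (hbnd : ∀ s ∈ Icc (w-δ) (w+δ), c ≤ |iteratedDeriv r h s|) :
    ∀ s ∈ Icc (w-δ) (w+δ), c * |s - w|^r / (r.factorial:ℝ) ≤ |h s| := by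
  have hwmem : w ∈ Icc (w-δ) (w+δ) := by constructor <;> linarith
  have hw := hbnd w hwmem
  rcases lt_or_ge 0 (iteratedDeriv r h w) with hpos | hneg
  · exact lemKpos h hh w δ c hδ hc r hd hbnd hpos
  · intro s hs
    have hres := lemKpos (fun x => -h x) hh.neg w δ c hδ hc r
      (fun k hk => by rw [iteratedDeriv_fun_neg, hd k hk, neg_zero])
      (fun t ht => by rw [iteratedDeriv_fun_neg, abs_neg]; exact hbnd t ht)
      (by rw [iteratedDeriv_fun_neg]; rcases abs_cases (iteratedDeriv r h w) with ⟨he,_⟩|⟨he,_⟩ <;> linarith)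
      s hs
    simpa using hres


lemma quarter (g : ℝ → ℝ) (hgd : Differentiable ℝ g)
    (a b : ℝ) (hdnn : ∀ x ∈ Icc a b, 0 ≤ deriv g x) (hmono : MonotoneOn g (Icc a b))
    (w δ c : ℝ) (n : ℕ) (hc : 0 < c)
    (hlow : ∀ s ∈ Icc (w-δ) (w+δ), c * |s - w|^n ≤ |deriv g s|)
    (w' t : ℝ) (hw' : w' ∈ Icc a b) (ht : t ∈ Icc a b) (hwt : w' ≤ t)
    (hsub : Icc w' t ⊆ Icc (w-δ) (w+δ)) :
    c * ((t - w')/4)^(n+1) ≤ g t - g w' := by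
  set L := t - w' with hL
  have hL0 : 0 ≤ L := by simp [hL]; linarith
  rcases eq_or_lt_of_le hL0 with hL0' | hLpos
  · have : t = w' := by simp [hL] at hL0'; linarith
    subst this
    have : L = 0 := by simp [hL]
    rw [this]
    simp
  -- subinterval bound helper
  have key : ∀ u v : ℝ, u ≤ v → Icc u v ⊆ Icc w' t → (∀ x ∈ Icc u v, L/4 ≤ |x - w|) →
      c * (L/4)^n * (v - u) ≤ g v - g u := by
    intro u v huv hsub' hfar
    have hsubab : Icc u v ⊆ Icc a b := hsub'.trans (Icc_subset_Icc hw'.1 ht.2)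
    have hd : ∀ x ∈ Icc u v, c * (L/4)^n ≤ deriv g x := by
      intro x hx
      have h1 := hlow x (hsub (hsub' hx))
      have h2 : |deriv g x| = deriv g x := abs_of_nonneg (hdnn x (hsubab hx))
      have h3 : c * (L/4)^n ≤ c * |x - w|^n :=
        mul_le_mul_of_nonneg_left (pow_le_pow_left₀ (by linarith) (hfar x hx) n) hc.le
      rw [h2] at h1
      linarith
    have hm : MonotoneOn (fun x => g x - c * (L/4)^n * x) (Icc u v) := by
      apply monotoneOn_of_deriv_nonneg (convex_Icc u v)
      · exact (hgd.continuous.sub (continuous_const.mul continuous_id)).continuousOn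
      · intro x _
        exact ((hgd x).sub ((differentiable_const _).mul differentiable_id x)).differentiableWithinAt
      · intro x hx
        have hx' : x ∈ Icc u v := interior_subset hx
        have hda : HasDerivAt (fun x => g x - c * (L/4)^n * x) (deriv g x - c * (L/4)^n * 1) x :=
          (hgd x).hasDerivAt.sub ((hasDerivAt_id x).const_mul _)
        rw [hda.deriv]
        have := hd x hx'
        linarith
    have := hm (left_mem_Icc.mpr huv) (right_mem_Icc.mpr huv) huv
    simp only at this
    nlinarith
  have hsubab' : Icc w' t ⊆ Icc a b := Icc_subset_Icc hw'.1 ht.2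
  rcases le_total w ((w' + t)/2) with hwmid | hwmid
  · -- use right quarter [t - L/4, t]
    have h1 : c * (L/4)^n * (t - (t - L/4)) ≤ g t - g (t - L/4) := by
      apply key (t - L/4) t (by linarith)
      · exact Icc_subset_Icc (by simp [hL]; linarith) le_rfl
      · intro x hx
        have : L/4 ≤ x - w := by
          have := hx.1
          simp only [hL] at *
          linarith
        calc L/4 ≤ x - w := this
        _ ≤ |x - w| := le_abs_self _
    have h2 : g w' ≤ g (t - L/4) := hmono hw' (hsubab' ⟨by simp [hL]; linarith, by linarith⟩) (by simp [hL]; linarith)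
    have h3 : (t - (t - L/4)) = L/4 := by ring
    rw [h3] at h1
    calc c * (L/4)^(n+1) = c * (L/4)^n * (L/4) := by ring
    _ ≤ g t - g (t - L/4) := h1
    _ ≤ g t - g w' := by linarith
  · -- use left quarter [w', w' + L/4]
    have h1 : c * (L/4)^n * ((w' + L/4) - w') ≤ g (w' + L/4) - g w' := by
      apply key w' (w' + L/4) (by linarith)
      · exact Icc_subset_Icc le_rfl (by simp [hL]; linarith)
      · intro x hx
        have : L/4 ≤ w - x := by
          have := hx.2
          simp only [hL] at *
          linarith
        calc L/4 ≤ w - x := this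
        _ ≤ |x - w| := by rw [abs_sub_comm]; exact le_abs_self _
    have h2 : g (w' + L/4) ≤ g t := hmono (hsubab' ⟨by linarith, by simp [hL]; linarith⟩) ht (by simp [hL]; linarith)
    have h3 : ((w' + L/4) - w') = L/4 := by ring
    rw [h3] at h1
    calc c * (L/4)^(n+1) = c * (L/4)^n * (L/4) := by ring
    _ ≤ g (w' + L/4) - g w' := h1
    _ ≤ g t - g w' := by linarith

lemma localEst (p : ℕ) (f : ℝ → ℝ) (hf : ContDiff ℝ (⊤:ℕ∞) f) (w : ℝ)
    (hj : ∃ j : ℕ, 2 ≤ j ∧ j ≤ p + 1 ∧ iteratedDeriv j f w ≠ 0) :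
    ∃ (m : ℕ) (δ c : ℝ), 1 ≤ m ∧ m ≤ p ∧ 0 < δ ∧ δ ≤ 1 ∧ 0 < c ∧
      ∀ s ∈ Icc (w-δ) (w+δ), c * |s - w|^(m-1) ≤ |deriv (deriv f) s| := by
  classical
  obtain ⟨j, hj2, hjp, hjne⟩ := hj
  have hrel : ∀ k : ℕ, iteratedDeriv (k+2) f = iteratedDeriv k (deriv (deriv f)) := by
    intro k
    rw [show k + 2 = (k+1) + 1 from rfl, iteratedDeriv_succ', iteratedDeriv_succ']
  have hex : ∃ n : ℕ, iteratedDeriv (n+2) f w ≠ 0 := by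
    refine ⟨j - 2, ?_⟩
    rwa [show j - 2 + 2 = j by omega]
  set n₀ := Nat.find hex with hn₀
  have hspec : iteratedDeriv (n₀+2) f w ≠ 0 := Nat.find_spec hex
  have hn₀le : n₀ ≤ j - 2 := Nat.find_le (by rwa [show j - 2 + 2 = j by omega])
  have hmin : ∀ k < n₀, iteratedDeriv (k+2) f w = 0 := by
    intro k hk
    by_contra hne
    exact (Nat.find_min hex hk) hne
  -- continuity of the n₀-th derivative
  have hdd : ContDiff ℝ (⊤:ℕ∞) (deriv (deriv f)) :=
    (contDiff_infty_iff_deriv.mp (contDiff_infty_iff_deriv.mp hf).2).2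
  set Y := iteratedDeriv n₀ (deriv (deriv f)) with hY
  have hYw : Y w ≠ 0 := by rw [hY, ← hrel]; exact hspec
  have hYcont : Continuous Y := hdd.continuous_iteratedDeriv n₀ (by exact_mod_cast le_top)
  set c₁ := |Y w| / 2 with hc₁
  have hc₁0 : 0 < c₁ := by rw [hc₁]; positivity
  obtain ⟨δ', hδ'0, hδ'⟩ := Metric.continuousAt_iff.mp hYcont.continuousAt c₁ hc₁0
  set δ := min (δ'/2) 1 with hδdef
  have hδ0 : 0 < δ := by rw [hδdef]; positivity
  have hδ1 : δ ≤ 1 := min_le_right _ _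
  have hbnd : ∀ s ∈ Icc (w-δ) (w+δ), c₁ ≤ |Y s| := by
    intro s hs
    have hds : dist s w < δ' := by
      rw [Real.dist_eq]
      have h1 : δ ≤ δ'/2 := min_le_left _ _
      have h2 : |s - w| ≤ δ := abs_le.mpr ⟨by linarith [hs.1], by linarith [hs.2]⟩
      linarith
    have := hδ' hds
    rw [Real.dist_eq] at this
    have h2 : |Y w| ≤ |Y s - Y w| + |Y s| := by
      calc |Y w| = |(Y w - Y s) + Y s| := by ring_nf
      _ ≤ |Y w - Y s| + |Y s| := abs_add_le _ _
      _ = |Y s - Y w| + |Y s| := by rw [abs_sub_comm]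
    rw [hc₁]
    linarith
  have hK := lemK (deriv (deriv f)) hdd w δ c₁ hδ0 hc₁0 n₀
    (fun k hk => by rw [← hrel]; exact hmin k hk) hbnd
  refine ⟨n₀ + 1, δ, c₁ / (n₀.factorial : ℝ), by omega, by omega, hδ0, hδ1, by positivity, ?_⟩
  intro s hs
  have := hK s hs
  have h3 : n₀ + 1 - 1 = n₀ := by omega
  rw [h3]
  calc c₁ / (n₀.factorial:ℝ) * |s - w|^n₀ = c₁ * |s - w|^n₀ / (n₀.factorial:ℝ) := by ring
  _ ≤ |deriv (deriv f) s| := this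

lemma rpow_trick (cg x D : ℝ) (hcg : 0 < cg) (hx : 0 ≤ x) (hD : 0 ≤ D)
    (p : ℕ) (hp : 1 ≤ p) (h : cg * x^p ≤ D) :
    x ≤ (1/cg)^(1/(p:ℝ)) * D^(1/(p:ℝ)) := by
  have hp0 : (p:ℝ) ≠ 0 := by positivity
  have h1 : (cg * x^p) ^ (1/(p:ℝ)) ≤ D ^ (1/(p:ℝ)) :=
    Real.rpow_le_rpow (by positivity) h (by positivity)
  have h2 : (cg * x^p) ^ (1/(p:ℝ)) = cg^(1/(p:ℝ)) * x := by
    rw [Real.mul_rpow hcg.le (by positivity), ← Real.rpow_natCast x p,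
      ← Real.rpow_mul hx]
    rw [show (p:ℝ) * (1/(p:ℝ)) = 1 by field_simp, Real.rpow_one]
  rw [h2] at h1
  have h3 : (0:ℝ) < cg^(1/(p:ℝ)) := Real.rpow_pos_of_pos hcg _
  have h4 : (1/cg)^(1/(p:ℝ)) = 1 / cg^(1/(p:ℝ)) := by
    simp [one_div, Real.inv_rpow hcg.le]
  rw [h4, ← sub_nonneg]
  have := div_nonneg (sub_nonneg.mpr h1) h3.le
  calc (0:ℝ) ≤ (D^(1/(p:ℝ)) - cg^(1/(p:ℝ)) * x) / cg^(1/(p:ℝ)) := this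
  _ = 1 / cg^(1/(p:ℝ)) * D^(1/(p:ℝ)) - x := by field_simp

end Stmt8Aux

open Stmt8Aux

/-- Hölder continuity of `(f')⁻¹` for a convex flux of
polynomial degeneracy. -/
theorem statement8 (p : ℕ) (hp : 1 ≤ p)
    (f : ℝ → ℝ) (hf : ContDiff ℝ (⊤ : ℕ∞) f) (a b : ℝ) (hab : a < b)
    (hconv : ∀ w ∈ Set.Icc a b, 0 ≤ iteratedDeriv 2 f w)
    (hnd : ∀ w ∈ Set.Icc a b, ∃ j : ℕ, 2 ≤ j ∧ j ≤ p + 1 ∧ iteratedDeriv j f w ≠ 0) :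
    StrictMonoOn (deriv f) (Set.Icc a b) ∧
    ∃ H > (0:ℝ), ∀ w ∈ Set.Icc a b, ∀ w' ∈ Set.Icc a b,
      |w - w'| ≤ H * |deriv f w - deriv f w'| ^ (1 / (p:ℝ)) := by
  classical
  have hfi : ContDiff ℝ (⊤:ℕ∞) f := hf.of_le (by simp)
  set g := deriv f with hgdef
  have hg : ContDiff ℝ (⊤:ℕ∞) g := (contDiff_infty_iff_deriv.mp hfi).2
  have hgd : Differentiable ℝ g := (contDiff_infty_iff_deriv.mp hg).1
  have hconv' : ∀ x ∈ Icc a b, 0 ≤ deriv g x := by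
    intro x hx
    have := hconv x hx
    rwa [iteratedDeriv_succ, iteratedDeriv_one] at this
  have hmono : MonotoneOn g (Icc a b) :=
    monotoneOn_of_deriv_nonneg (convex_Icc a b) hg.continuous.continuousOn
      hgd.differentiableOn (fun x hx => hconv' x (interior_subset hx))
  have hloc : ∀ w : Icc a b, ∃ (m : ℕ) (δ c : ℝ), 1 ≤ m ∧ m ≤ p ∧ 0 < δ ∧ δ ≤ 1 ∧ 0 < c ∧
      ∀ s ∈ Icc ((w:ℝ)-δ) ((w:ℝ)+δ), c * |s - (w:ℝ)|^(m-1) ≤ |deriv g s| :=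
    fun w => localEst p f hfi w (hnd w w.2)
  choose m δf cf hm1 hmp hδ0 hδ1 hc0 hlow using hloc
  have hcov : Icc a b ⊆ ⋃ w : Icc a b, Metric.ball (w:ℝ) (δf w / 2) := by
    intro x hx
    exact mem_iUnion.mpr ⟨⟨x, hx⟩, Metric.mem_ball_self (half_pos (hδ0 _))⟩
  obtain ⟨T, hT⟩ := isCompact_Icc.elim_finite_subcover
    (fun w : Icc a b => Metric.ball (w:ℝ) (δf w / 2)) (fun i => Metric.isOpen_ball) hcov
  have haIcc : a ∈ Icc a b := ⟨le_rfl, hab.le⟩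
  have hTne : T.Nonempty := by
    obtain ⟨i, hi, _⟩ := mem_iUnion₂.mp (hT haIcc)
    exact ⟨i, hi⟩
  set δ₀ := T.inf' hTne (fun i => δf i / 2) with hδ₀def
  have hδ₀pos : 0 < δ₀ := by
    rw [hδ₀def, Finset.lt_inf'_iff]
    intro i _
    have := hδ0 i; linarith
  have hδ₀le : ∀ i ∈ T, δ₀ ≤ δf i / 2 := fun i hi => Finset.inf'_le _ hi
  set c₀ := T.inf' hTne cf with hc₀def
  have hc₀pos : 0 < c₀ := by
    rw [hc₀def, Finset.lt_inf'_iff]; intro i _; exact hc0 i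
  set cc := c₀ / 4^p with hccdef
  have hccpos : 0 < cc := by positivity
  have hclose : ∀ w' ∈ Icc a b, ∀ t ∈ Icc a b, w' ≤ t → t - w' ≤ δ₀ →
      cc * (t - w')^p ≤ g t - g w' := by
    intro w' hw' t ht hwt hgap
    obtain ⟨i, hiT, hib⟩ := mem_iUnion₂.mp (hT hw')
    have hd : dist w' ((i:Icc a b):ℝ) < δf i / 2 := Metric.mem_ball.mp hib
    rw [Real.dist_eq] at hd
    have h1 := abs_lt.mp hd
    have hδi := hδ₀le i hiT
    have hball : Icc w' t ⊆ Icc (((i:Icc a b):ℝ) - δf i) (((i:Icc a b):ℝ) + δf i) := by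
      intro x hx
      constructor
      · have := hx.1; linarith [h1.1]
      · have := hx.2; linarith [h1.2]
    obtain ⟨n, hn⟩ : ∃ n, m i = n + 1 := ⟨m i - 1, by have := hm1 i; omega⟩
    have hlowi := hlow i
    rw [hn] at hlowi
    simp only [Nat.add_sub_cancel] at hlowi
    have hq := quarter g hgd a b hconv' hmono ((i:Icc a b):ℝ) (δf i) (cf i) n (hc0 i)
      hlowi w' t hw' ht hwt hball
    have hLle : (t - w')/4 ≤ 1 := by
      have := hδ1 i
      linarith
    have hL0 : 0 ≤ (t - w')/4 := by linarith
    have hpow : ((t - w')/4)^p ≤ ((t - w')/4)^(n+1) :=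
      pow_le_pow_of_le_one hL0 hLle (by have := hmp i; omega)
    have h5 : cf i * ((t-w')/4)^p ≤ g t - g w' := by
      have := mul_le_mul_of_nonneg_left hpow (hc0 i).le
      linarith
    have h6 : c₀ ≤ cf i := Finset.inf'_le _ hiT
    have h7 : cc * (t - w')^p = c₀ * ((t-w')/4)^p := by
      rw [hccdef, div_pow]; ring
    have h8 : c₀ * ((t-w')/4)^p ≤ cf i * ((t-w')/4)^p :=
      mul_le_mul_of_nonneg_right h6 (by positivity)
    rw [h7]
    linarith
  have hstrict : StrictMonoOn g (Icc a b) := by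
    intro x hx y hy hxy
    set s := min y (x + δ₀) with hsdef
    have hxs : x < s := lt_min hxy (by linarith)
    have hsy : s ≤ y := min_le_left _ _
    have hsmem : s ∈ Icc a b := ⟨le_trans hx.1 hxs.le, le_trans hsy hy.2⟩
    have hgap : s - x ≤ δ₀ := by
      have := min_le_right y (x + δ₀); linarith
    have hcl := hclose x hx s hsmem hxs.le hgap
    have hpos : 0 < cc * (s - x)^p := mul_pos hccpos (pow_pos (by linarith) p)
    have hsy' := hmono hsmem hy hsy
    linarith
  refine ⟨hstrict, ?_⟩
  have hba : 0 < b - a := by linarith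
  set cg := min cc (cc * δ₀^p / (b-a)^p) with hcgdef
  have hcgpos : 0 < cg := lt_min hccpos (by positivity)
  have hglob : ∀ w' ∈ Icc a b, ∀ t ∈ Icc a b, w' ≤ t → cg * (t - w')^p ≤ g t - g w' := by
    intro w' hw' t ht hwt
    rcases le_total (t - w') δ₀ with hgap | hgap
    · have h1 := hclose w' hw' t ht hwt hgap
      have h2 : cg * (t-w')^p ≤ cc * (t-w')^p :=
        mul_le_mul_of_nonneg_right (min_le_left _ _) (pow_nonneg (by linarith) p)
      linarith
    · have hd0 : w' + δ₀ ∈ Icc a b := ⟨by linarith [hw'.1], by linarith [ht.2]⟩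
      have h1 := hclose w' hw' (w' + δ₀) hd0 (by linarith) (by linarith)
      rw [show w' + δ₀ - w' = δ₀ by ring] at h1
      have h2 : g (w' + δ₀) ≤ g t := hmono hd0 ht (by linarith)
      have h3 : (t - w')^p ≤ (b - a)^p :=
        pow_le_pow_left₀ (by linarith) (by linarith [hw'.1, ht.2]) p
      have h4 : cg ≤ cc * δ₀^p / (b-a)^p := min_le_right _ _
      have h5 : cg * (t-w')^p ≤ (cc * δ₀^p / (b-a)^p) * (b-a)^p :=
        mul_le_mul h4 h3 (pow_nonneg (by linarith) p) (by positivity)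
      have h6 : (cc * δ₀^p / (b-a)^p) * (b-a)^p = cc * δ₀^p := by
        field_simp
      linarith
  refine ⟨(1/cg)^(1/(p:ℝ)), Real.rpow_pos_of_pos (by positivity) _, ?_⟩
  intro w hw w' hw'
  rcases le_total w' w with hle | hle
  · have h1 := hglob w' hw' w hw hle
    have hD0 : 0 ≤ g w - g w' := le_trans (mul_nonneg hcgpos.le (pow_nonneg (by linarith) p)) h1
    have h2 := rpow_trick cg (w - w') (g w - g w') hcgpos (by linarith) hD0 p hp h1
    rw [abs_of_nonneg (by linarith : (0:ℝ) ≤ w - w'), abs_of_nonneg hD0]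
    exact h2
  · have h1 := hglob w hw w' hw' hle
    have hD0 : 0 ≤ g w' - g w := le_trans (mul_nonneg hcgpos.le (pow_nonneg (by linarith) p)) h1
    have h2 := rpow_trick cg (w' - w) (g w' - g w) hcgpos (by linarith) hD0 p hp h1
    rw [abs_sub_comm w w', abs_sub_comm (g w) (g w'),
      abs_of_nonneg (by linarith : (0:ℝ) ≤ w' - w), abs_of_nonneg hD0]
    exact h2
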